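/- If p is a prime not dividing n (n ≥ 2 a positive integer), then H(n·p^α) tends to 0 as α → ∞. -/

import Mathlib

open Real Filter

/-- Ω(n): number of prime factors of n counted with multiplicity. -/
def Omega (n : ℕ) : ℕ := ∑ p ∈ n.primeFactors, n.factorization p

/-- The entropy H of a natural number. -/
noncomputable def Hent (n : ℕ) : ℝ :=
  Real.log (Omega n) -
    (1 / (Omega n : ℝ)) *
      ∑ p ∈ n.primeFactors, (n.factorization p : ℝ) * Real.log (n.factorization p)

/-! Since `p ∤ n`, both `Ω` and `∑ αᵢ log αᵢ` are additive on `n · p^α`, so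
`H(n p^α) = log (Ω(n) + α) - (C + α log α) / (Ω(n) + α)` with `C` depending only on `n`;
and `log (k + x) - (C + x log x) / (k + x) = log (1 + k / x) + (k log x - C) / (k + x) → 0`. -/

namespace Nat

variable {M : Type*} [AddCommMonoid M]

theorem Coprime.sum_primeFactors_factorization_mul {a b : ℕ} (hab : a.Coprime b) (g : ℕ → M) :
    ∑ q ∈ (a * b).primeFactors, g ((a * b).factorization q) =
      ∑ q ∈ a.primeFactors, g (a.factorization q) +
        ∑ q ∈ b.primeFactors, g (b.factorization q) := by
  change (a * b).factorization.sum (fun _ k => g k) =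
    a.factorization.sum (fun _ k => g k) + b.factorization.sum (fun _ k => g k)
  rw [factorization_mul_of_coprime hab]
  exact Finsupp.sum_add_index_of_disjoint hab.disjoint_primeFactors _

theorem Prime.sum_primeFactors_factorization_pow {p : ℕ} (hp : p.Prime) {g : ℕ → M}
    (hg : g 0 = 0) (α : ℕ) :
    ∑ q ∈ (p ^ α).primeFactors, g ((p ^ α).factorization q) = g α := by
  change (p ^ α).factorization.sum (fun _ k => g k) = g α
  rw [hp.factorization_pow, Finsupp.sum_single_index hg]

end Nat

theorem Hent_mul_prime_pow {n p : ℕ} (hp : p.Prime) (hcop : ¬ p ∣ n) (α : ℕ) :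
    Hent (n * p ^ α) = Real.log (Omega n + α) - (1 / ((Omega n : ℝ) + α)) *
      ((∑ q ∈ n.primeFactors, (n.factorization q : ℝ) * Real.log (n.factorization q)) +
        α * Real.log α) := by
  have hcop' : n.Coprime (p ^ α) := ((hp.coprime_iff_not_dvd.2 hcop).pow_left α).symm
  have hOmega : Omega (n * p ^ α) = Omega n + α :=
    (hcop'.sum_primeFactors_factorization_mul fun k => k).trans
      (congrArg _ (hp.sum_primeFactors_factorization_pow (g := fun k => k) rfl α))
  have hsum := hcop'.sum_primeFactors_factorization_mul fun k : ℕ => (k : ℝ) * Real.log k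
  rw [hp.sum_primeFactors_factorization_pow (g := fun k : ℕ => (k : ℝ) * Real.log k) (by simp)]
    at hsum
  rw [Hent, hOmega, hsum]
  push_cast
  rfl

theorem tendsto_log_add_sub_div_add_atTop (k C : ℝ) :
    Tendsto (fun x : ℝ => Real.log (k + x) - (1 / (k + x)) * (C + x * Real.log x))
      atTop (nhds 0) := by
  have hlog_ratio : Tendsto (fun x : ℝ => Real.log (k / x + 1)) atTop (nhds 0) := by
    have h := (tendsto_const_nhds (x := k)).div_atTop tendsto_id |>.add_const 1
    simpa [Function.comp_def] using
      (continuousAt_log (by norm_num : (0 : ℝ) + 1 ≠ 0)).tendsto.comp h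
  have hlog_div : Tendsto (fun x : ℝ => (k * Real.log x - C) / (k + x)) atTop (nhds 0) := by
    have hden : Tendsto (fun x : ℝ => k + x) atTop atTop :=
      tendsto_atTop_add_const_left _ _ tendsto_id
    have h := ((tendsto_pow_log_div_mul_add_atTop 1 k 1 one_ne_zero).const_mul k).sub
      ((tendsto_const_nhds (x := C)).div_atTop hden)
    simp only [pow_one, one_mul, mul_zero, sub_zero] at h
    exact h.congr fun x => by ring
  rw [← add_zero (0 : ℝ)]
  refine (hlog_ratio.add hlog_div).congr' ?_
  filter_upwards [eventually_gt_atTop 0, eventually_gt_atTop (-k)] with x hx hkx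
  have hkx' : 0 < k + x := by linarith
  rw [show k / x + 1 = (k + x) / x by field_simp, Real.log_div hkx'.ne' hx.ne']
  field_simp
  ring

theorem stmt_10_general (n p : ℕ) (hp : p.Prime) (hcop : ¬ p ∣ n) :
    Tendsto (fun α : ℕ => Hent (n * p ^ α)) atTop (nhds 0) := by
  refine ((tendsto_log_add_sub_div_add_atTop (Omega n)
    (∑ q ∈ n.primeFactors, (n.factorization q : ℝ) * Real.log (n.factorization q))).comp
      tendsto_natCast_atTop_atTop).congr fun α => ?_
  rw [Function.comp_apply, Hent_mul_prime_pow hp hcop]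

theorem stmt_10 (n p : ℕ) (hn : 2 ≤ n) (hp : p.Prime) (hcop : ¬ p ∣ n) :
    Tendsto (fun α : ℕ => Hent (n * p ^ α)) atTop (nhds 0) :=
  stmt_10_general n p hp hcop
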